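/- The number of elements g of the group G with ν(g) ≤ n is at most 40^n, where ν(g) = min over finite binary subtrees S (containing the root) of E(S) + Σ_{v ∈ ∂S} |g[v]|, E(S) the number of edges of S, ∂S its leaves, and g[v] the action on the subtree below v. -/

import Mathlib

/-!
Vertices of the rooted binary tree are finite binary sequences, modelled as `List Bool`.
An automorphism of the tree is described by a *portrait* `p : List Bool → Bool`, recording
at each vertex whether the two subtrees below it are swapped.
-/

/-- The action on vertices of the tree automorphism with portrait `p`. -/
def act (p : List Bool → Bool) : List Bool → List Bool
  | [] => []
  | i :: v => (xor (p []) i) :: act (fun w => p (i :: w)) v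

theorem act_injective (p : List Bool → Bool) : Function.Injective (act p) := by
  intro u
  induction u generalizing p with
  | nil =>
    intro v h
    cases v with
    | nil => rfl
    | cons j w => simp [act] at h
  | cons i u ih =>
    intro v h
    cases v with
    | nil => simp [act] at h
    | cons j w =>
      simp only [act, List.cons.injEq] at h
      obtain ⟨h1, h2⟩ := h
      have hij : i = j := by cases hp : p [] <;> cases i <;> cases j <;> simp_all
      subst hij
      exact congrArg _ (ih (p := fun w => p (i :: w)) h2)

theorem act_surjective (p : List Bool → Bool) : Function.Surjective (act p) := by
  intro v
  induction v generalizing p with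
  | nil => exact ⟨[], rfl⟩
  | cons j w ih =>
    obtain ⟨u, hu⟩ := ih (p := fun w => p ((xor (p []) j) :: w))
    refine ⟨xor (p []) j :: u, ?_⟩
    simp only [act, hu, List.cons.injEq, and_true]
    cases hp : p [] <;> cases j <;> simp

/-- The tree automorphism with portrait `p`, as a permutation of the vertex set. -/
noncomputable def permOfPortrait (p : List Bool → Bool) : Equiv.Perm (List Bool) :=
  Equiv.ofBijective (act p) ⟨act_injective p, act_surjective p⟩

mutual
  /-- Portrait of the generator `a = (1, b)`. -/
  def pa : List Bool → Bool
    | [] => false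
    | i :: u => if i then pb u else false
  /-- Portrait of the generator `b = (1, a)ε`. -/
  def pb : List Bool → Bool
    | [] => true
    | i :: u => if i then pa u else false
end

/-- The automorphism `a = (1, b)`. -/
noncomputable def aPerm : Equiv.Perm (List Bool) := permOfPortrait pa

/-- The automorphism `b = (1, a)ε`. -/
noncomputable def bPerm : Equiv.Perm (List Bool) := permOfPortrait pb

/-- The generating set `{a, a⁻¹, b, b⁻¹}` (as functions on vertices). -/
noncomputable def gens : Set (List Bool → List Bool) :=
  {⇑aPerm, ⇑bPerm, ⇑aPerm⁻¹, ⇑bPerm⁻¹}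

/-- The word length of a vertex map with respect to `{a±1, b±1}`:
the least length of a word in the generators whose composition is `f`. -/
noncomputable def len (f : List Bool → List Bool) : ℕ :=
  sInf {n | ∃ l : List (List Bool → List Bool),
    l.length = n ∧ (∀ x ∈ l, x ∈ gens) ∧ l.foldr Function.comp id = f}

/-- Finite binary subtrees (containing the root, every vertex with 0 or 2 children). -/
inductive BTree : Type
  | leaf : BTree
  | node : BTree → BTree → BTree

/-- The leaves of a finite binary subtree, as vertices of the infinite binary tree. -/
def leavesOf : BTree → List (List Bool)
  | .leaf => [[]]
  | .node l r => ((leavesOf l).map (List.cons false)) ++ ((leavesOf r).map (List.cons true))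

/-- The section `g[v]` of `g` at the vertex `v`: the action of `g` on the descendant
subtree of `v`. -/
def sec (g : List Bool → List Bool) (v : List Bool) : List Bool → List Bool :=
  fun w => (g (v ++ w)).drop v.length

/-- The fractal norm `ν(g)`: the minimum over finite binary subtrees `S` of
`E(S) + Σ_{v ∈ ∂S} |g[v]|`, where `E(S) = #∂S − 1` is the number of edges of `S`. -/
noncomputable def nu (g : List Bool → List Bool) : ℕ :=
  sInf {m | ∃ S : BTree,
    m = ((leavesOf S).length - 1) + (((leavesOf S).map fun v => len (sec g v)).sum)}

/-!
Every `g ∈ G` is a word in `a^{±1}, b^{±1}`, and so is each of its sections: `(f h)[v] = f[h v] h[v]`,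
and the sections of the generators are generators or trivial, because restricting the portraits
of `a` and `b` to a subtree gives the portrait of `a`, `b` or `1`. Splitting `g = (g[0], g[1]) ε^β`
recursively along an optimal subtree `S` writes `g` as a binary tree carrying a bit at each of its
`E(S)` internal vertices and a minimal word for `g[v]` at each leaf `v`. Such a decorated tree is
recovered from a string of `ν(g)` symbols, one per internal vertex (its bit, and which children
carry the empty word) and one per letter (and whether it ends its word), so there are at most
`17 ^ n` elements with `ν(g) ≤ n`.
-/

theorem List.eq_of_getElem?_eq_of_length_le {β : Type*} {l₁ l₂ : List β} {n : ℕ}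
    (h₁ : l₁.length ≤ n) (h₂ : l₂.length ≤ n) (h : ∀ i < n, l₁[i]? = l₂[i]?) : l₁ = l₂ := by
  refine List.ext_getElem? fun i => ?_
  rcases lt_or_ge i n with hi | hi
  · exact h i hi
  · rw [List.getElem?_eq_none (h₁.trans hi), List.getElem?_eq_none (h₂.trans hi)]

inductive DecoratedTree (α : Type*) where
  | leaf (w : List α)
  | node (b : Bool) (l r : DecoratedTree α)

namespace DecoratedTree

variable {α : Type*}

def size : DecoratedTree α → ℕ
  | leaf w => w.length
  | node _ l r => l.size + r.size + 1

abbrev Symbol (α : Type*) := (Bool × Bool × Bool) ⊕ (α × Bool)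

def encodeWord : α → List α → List (Symbol α)
  | a, [] => [.inr (a, true)]
  | a, b :: w => .inr (a, false) :: encodeWord b w

/-- One symbol per internal node and per letter. A node symbol also records which children are
encoded by the empty string (leaves with the empty word), and a letter symbol whether it ends its
word; this makes the code prefix-free. -/
def encode : DecoratedTree α → List (Symbol α)
  | leaf [] => []
  | leaf (a :: w) => encodeWord a w
  | node b l r => .inl (b, (encode l).isEmpty, (encode r).isEmpty) :: (encode l ++ encode r)

theorem length_encodeWord (a : α) (w : List α) : (encodeWord a w).length = w.length + 1 := by
  induction w generalizing a with
  | nil => rfl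
  | cons b w ih => simp [encodeWord, ih]

theorem length_encode (t : DecoratedTree α) : (encode t).length = t.size := by
  induction t with
  | leaf w => cases w <;> simp [encode, size, length_encodeWord]
  | node b l r ihl ihr => simp [encode, size, ihl, ihr]

theorem encodeWord_eq_cons (a : α) (w : List α) :
    ∃ s, encodeWord a w = .inr (a, w.isEmpty) :: s := by
  cases w <;> exact ⟨_, rfl⟩

theorem encodeWord_append_inj {a a' : α} {w w' : List α} {r r' : List (Symbol α)}
    (h : encodeWord a w ++ r = encodeWord a' w' ++ r') : a = a' ∧ w = w' ∧ r = r' := by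
  induction w generalizing a a' w' with
  | nil => cases w' <;> simp_all [encodeWord]
  | cons b w ih =>
    cases w' with
    | nil => simp [encodeWord] at h
    | cons b' w' =>
      simp only [encodeWord, List.cons_append, List.cons.injEq, Sum.inr.injEq, Prod.mk.injEq] at h
      obtain ⟨rfl, rfl, rfl⟩ := ih h.2
      exact ⟨h.1.1, rfl, rfl⟩

theorem encode_leaf_append_inj {w : List α} {t : DecoratedTree α} {r₁ r₂ : List (Symbol α)}
    (hnil : encode (leaf w) = [] ↔ encode t = []) (h : encode (leaf w) ++ r₁ = encode t ++ r₂) :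
    leaf w = t ∧ r₁ = r₂ := by
  rcases t with ⟨_ | ⟨a', w'⟩⟩ | ⟨b, l, r⟩ <;> rcases w with _ | ⟨a, w⟩
  · exact ⟨rfl, by simpa [encode] using h⟩
  · obtain ⟨s, hs⟩ := encodeWord_eq_cons a w
    simp [encode, hs] at hnil
  · obtain ⟨s, hs⟩ := encodeWord_eq_cons a' w'
    simp [encode, hs] at hnil
  · obtain ⟨rfl, rfl, rfl⟩ := encodeWord_append_inj h
    exact ⟨rfl, rfl⟩
  · simp [encode] at hnil
  · obtain ⟨s, hs⟩ := encodeWord_eq_cons a w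
    simp [encode, hs] at h

theorem encode_append_inj {t₁ t₂ : DecoratedTree α} {r₁ r₂ : List (Symbol α)}
    (hnil : encode t₁ = [] ↔ encode t₂ = []) (h : encode t₁ ++ r₁ = encode t₂ ++ r₂) :
    t₁ = t₂ ∧ r₁ = r₂ := by
  induction t₁ generalizing t₂ r₁ r₂ with
  | leaf w => exact encode_leaf_append_inj hnil h
  | node b l r ihl ihr =>
    cases t₂ with
    | leaf w =>
      obtain ⟨h₁, h₂⟩ := encode_leaf_append_inj hnil.symm h.symm
      exact ⟨h₁.symm, h₂.symm⟩
    | node b' l' r' =>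
      simp only [encode, List.cons_append, List.cons.injEq, Sum.inl.injEq, Prod.mk.injEq,
        List.append_assoc] at h
      obtain ⟨⟨rfl, hl, hr⟩, hlr⟩ := h
      obtain ⟨rfl, hr'⟩ := ihl (by rw [← List.isEmpty_iff, hl, List.isEmpty_iff]) hlr
      obtain ⟨rfl, rfl⟩ := ihr (by rw [← List.isEmpty_iff, hr, List.isEmpty_iff]) hr'
      exact ⟨rfl, rfl⟩

theorem encode_injective : Function.Injective (encode (α := α)) := fun t₁ t₂ h =>
  (encode_append_inj (by rw [h]) (congrArg (· ++ []) h)).1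

theorem injective_encode_getElem? (n : ℕ) :
    Function.Injective fun (t : {t : DecoratedTree α // t.size ≤ n}) (i : Fin n) =>
      (encode t.1)[i.1]? := fun t₁ t₂ h =>
  Subtype.ext <| encode_injective <| List.eq_of_getElem?_eq_of_length_le
    (by rw [length_encode]; exact t₁.2) (by rw [length_encode]; exact t₂.2)
    fun i hi => congrFun h ⟨i, hi⟩

instance [Finite α] (n : ℕ) : Finite {t : DecoratedTree α // t.size ≤ n} :=
  Finite.of_injective _ (injective_encode_getElem? n)

theorem card_size_le [Finite α] (n : ℕ) :
    Nat.card {t : DecoratedTree α // t.size ≤ n} ≤ (2 * Nat.card α + 9) ^ n := by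
  refine (Nat.card_le_card_of_injective _ (injective_encode_getElem? n)).trans_eq ?_
  simp only [Nat.card_fun, Finite.card_option, Nat.card_sum, Nat.card_prod,
    Nat.card_eq_fintype_card (α := Bool), Fintype.card_bool, Nat.card_fin]
  ring

end DecoratedTree

structure IsTreeAut (f : List Bool → List Bool) : Prop where
  injective : Function.Injective f
  length_apply (v : List Bool) : (f v).length = v.length
  prefix_apply (v u : List Bool) : f v <+: f (v ++ u)

theorem isTreeAut_id : IsTreeAut id :=
  ⟨Function.injective_id, fun _ => rfl, fun v u => List.prefix_append v u⟩

namespace IsTreeAut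

variable {f h : List Bool → List Bool}

theorem comp (hf : IsTreeAut f) (hh : IsTreeAut h) : IsTreeAut (f ∘ h) where
  injective := hf.injective.comp hh.injective
  length_apply v := by simp only [Function.comp_apply, hf.length_apply, hh.length_apply]
  prefix_apply v u := by
    obtain ⟨t, ht⟩ := hh.prefix_apply v u
    simpa only [Function.comp_apply, ← ht] using hf.prefix_apply (h v) t

theorem apply_append (hf : IsTreeAut f) (v u : List Bool) : f (v ++ u) = f v ++ sec f v u := by
  obtain ⟨t, ht⟩ := hf.prefix_apply v u
  rw [sec, ← ht, List.drop_left' (hf.length_apply v)]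

end IsTreeAut

theorem sec_eq_of_apply_append {f g : List Bool → List Bool} {v : List Bool}
    (hlen : (f v).length = v.length) (h : ∀ w, f (v ++ w) = f v ++ g w) : sec f v = g := by
  funext w
  rw [sec, h, List.drop_left' hlen]

theorem sec_id (v : List Bool) : sec id v = id :=
  sec_eq_of_apply_append rfl fun _ => rfl

theorem sec_sec (f : List Bool → List Bool) (v u : List Bool) :
    sec (sec f v) u = sec f (v ++ u) := by
  funext w
  simp only [sec, List.drop_drop, List.append_assoc, List.length_append]

theorem sec_comp {f h : List Bool → List Bool} (hh : IsTreeAut h) (v : List Bool) :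
    sec (f ∘ h) v = sec f (h v) ∘ sec h v := by
  funext u
  show (f (h (v ++ u))).drop v.length = (f (h v ++ sec h v u)).drop (h v).length
  rw [hh.apply_append, hh.length_apply]

/-- The map written `(f₀, f₁) ε^β`. -/
def wreath (β : Bool) (f₀ f₁ : List Bool → List Bool) : List Bool → List Bool
  | [] => []
  | i :: u => xor β i :: cond i (f₁ u) (f₀ u)

theorem IsTreeAut.eq_wreath {f : List Bool → List Bool} (hf : IsTreeAut f) :
    f = wreath ((f [false]).headD false) (sec f [false]) (sec f [true]) := by
  obtain ⟨c₀, h₀⟩ := List.length_eq_one_iff.mp (hf.length_apply [false])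
  obtain ⟨c₁, h₁⟩ := List.length_eq_one_iff.mp (hf.length_apply [true])
  have hc : c₁ = !c₀ := by
    have : f [false] ≠ f [true] := hf.injective.ne (by simp)
    cases c₀ <;> cases c₁ <;> simp_all
  funext v
  cases v with
  | nil => exact List.eq_nil_of_length_eq_zero (hf.length_apply [])
  | cons i u =>
    rw [← List.singleton_append, hf.apply_append]
    cases i <;> simp [wreath, h₀, h₁, hc]

def actInv (p : List Bool → Bool) : List Bool → List Bool
  | [] => []
  | i :: v => xor (p []) i :: actInv (fun w => p (xor (p []) i :: w)) v

section Portrait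

variable (p : List Bool → Bool)

theorem act_actInv (v : List Bool) : act p (actInv p v) = v := by
  induction v generalizing p with
  | nil => rfl
  | cons i v ih => simp [actInv, act, ih]

theorem coe_inv_permOfPortrait : ⇑(permOfPortrait p)⁻¹ = actInv p :=
  funext fun v => (Equiv.symm_apply_eq _).mpr (act_actInv p v).symm

theorem length_act (v : List Bool) : (act p v).length = v.length := by
  induction v generalizing p with
  | nil => rfl
  | cons i v ih => simp [act, ih]

theorem length_actInv (v : List Bool) : (actInv p v).length = v.length := by
  induction v generalizing p with
  | nil => rfl
  | cons i v ih => simp [actInv, ih]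

theorem act_append (v w : List Bool) :
    act p (v ++ w) = act p v ++ act (fun u => p (v ++ u)) w := by
  induction v generalizing p with
  | nil => rfl
  | cons i v ih => simp [act, ih]

theorem actInv_append (v w : List Bool) :
    actInv p (v ++ w) = actInv p v ++ actInv (fun u => p (actInv p v ++ u)) w := by
  induction v generalizing p with
  | nil => rfl
  | cons i v ih => simp [actInv, ih]

theorem sec_act (v : List Bool) : sec (act p) v = act (fun u => p (v ++ u)) :=
  sec_eq_of_apply_append (length_act p v) (act_append p v)

theorem sec_actInv (v : List Bool) :
    sec (actInv p) v = actInv (fun u => p (actInv p v ++ u)) :=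
  sec_eq_of_apply_append (length_actInv p v) (actInv_append p v)

theorem isTreeAut_act : IsTreeAut (act p) :=
  ⟨act_injective p, length_act p, fun v u => ⟨_, (act_append p v u).symm⟩⟩

theorem isTreeAut_actInv : IsTreeAut (actInv p) :=
  ⟨Function.LeftInverse.injective (act_actInv p), length_actInv p,
    fun v u => ⟨_, (actInv_append p v u).symm⟩⟩

theorem act_const_false : act (fun _ => false) = id := by
  funext v
  induction v with
  | nil => rfl
  | cons i v ih => simp [act, ih]

theorem actInv_const_false : actInv (fun _ => false) = id := by
  funext v
  induction v with
  | nil => rfl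
  | cons i v ih => simp [actInv, ih]

end Portrait

/-- Portraits of the states `a`, `b`, `1` of the automaton defining `G`. -/
def states : Set (List Bool → Bool) := {pa, pb, fun _ => false}

theorem restrict_mem_states {p : List Bool → Bool} (hp : p ∈ states) (v : List Bool) :
    (fun u => p (v ++ u)) ∈ states := by
  induction v generalizing p with
  | nil => exact hp
  | cons i v ih =>
    refine ih (p := fun u => p (i :: u)) ?_
    rcases hp with rfl | rfl | rfl <;> cases i <;> simp [states, pa, pb]

noncomputable def wordMaps : Submonoid (Function.End (List Bool)) := Submonoid.closure gens

theorem gens_eq : gens = {act pa, act pb, actInv pa, actInv pb} := by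
  simp only [gens, aPerm, bPerm, coe_inv_permOfPortrait]
  rfl

theorem act_mem_wordMaps {p : List Bool → Bool} (hp : p ∈ states) : act p ∈ wordMaps := by
  rcases hp with rfl | rfl | rfl
  · exact Submonoid.subset_closure (show act pa ∈ gens by rw [gens_eq]; simp)
  · exact Submonoid.subset_closure (show act pb ∈ gens by rw [gens_eq]; simp)
  · rw [act_const_false]; exact one_mem _

theorem actInv_mem_wordMaps {p : List Bool → Bool} (hp : p ∈ states) : actInv p ∈ wordMaps := by
  rcases hp with rfl | rfl | rfl
  · exact Submonoid.subset_closure (show actInv pa ∈ gens by rw [gens_eq]; simp)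
  · exact Submonoid.subset_closure (show actInv pb ∈ gens by rw [gens_eq]; simp)
  · rw [actInv_const_false]; exact one_mem _

theorem IsTreeAut.of_mem_wordMaps {f : List Bool → List Bool} (hf : f ∈ wordMaps) :
    IsTreeAut f := by
  induction hf using Submonoid.closure_induction with
  | mem x hx =>
    rw [gens_eq] at hx
    rcases hx with rfl | rfl | rfl | rfl
    exacts [isTreeAut_act _, isTreeAut_act _, isTreeAut_actInv _, isTreeAut_actInv _]
  | one => exact isTreeAut_id
  | mul x y _ _ hx hy => exact hx.comp hy

theorem sec_mem_wordMaps {f : List Bool → List Bool} (hf : f ∈ wordMaps) (v : List Bool) :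
    sec f v ∈ wordMaps := by
  induction hf using Submonoid.closure_induction generalizing v with
  | mem x hx =>
    have hpa : pa ∈ states := Or.inl rfl
    have hpb : pb ∈ states := Or.inr (Or.inl rfl)
    rw [gens_eq] at hx
    rcases hx with rfl | rfl | rfl | rfl
    · exact sec_act pa v ▸ act_mem_wordMaps (restrict_mem_states hpa v)
    · exact sec_act pb v ▸ act_mem_wordMaps (restrict_mem_states hpb v)
    · exact sec_actInv pa v ▸ actInv_mem_wordMaps (restrict_mem_states hpa _)
    · exact sec_actInv pb v ▸ actInv_mem_wordMaps (restrict_mem_states hpb _)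
  | one => exact (sec_id v).symm ▸ one_mem _
  | mul x y _ hy hx' hy' =>
    change sec (x ∘ y) v ∈ wordMaps
    rw [sec_comp (IsTreeAut.of_mem_wordMaps hy)]
    exact wordMaps.mul_mem (hx' (y v)) (hy' v)

theorem coe_mem_wordMaps {g : Equiv.Perm (List Bool)}
    (hg : g ∈ Subgroup.closure ({aPerm, bPerm} : Set (Equiv.Perm (List Bool)))) :
    ⇑g ∈ wordMaps := by
  induction hg using Subgroup.closure_induction'' with
  | mem x hx =>
    rcases hx with rfl | rfl <;> exact Submonoid.subset_closure (show _ ∈ gens by simp [gens])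
  | inv_mem x hx =>
    rcases hx with rfl | rfl <;> exact Submonoid.subset_closure (show _ ∈ gens by simp [gens])
  | one => exact one_mem _
  | mul x y _ _ hx hy => exact mul_mem hx hy

theorem exists_word_length_eq_len {f : List Bool → List Bool} (hf : f ∈ wordMaps) :
    ∃ w : List gens, w.length = len f ∧ (w.map Subtype.val).foldr (· ∘ ·) id = f := by
  obtain ⟨l, hl, hprod⟩ := Submonoid.exists_list_of_mem_closure (M := Function.End (List Bool)) hf
  obtain ⟨l, hlen, hgens, hfold⟩ := Nat.sInf_mem (⟨_, l, rfl, hl, hprod⟩ :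
    {n | ∃ l : List (List Bool → List Bool),
      l.length = n ∧ (∀ x ∈ l, x ∈ gens) ∧ l.foldr Function.comp id = f}.Nonempty)
  lift l to List gens using hgens
  exact ⟨l, (List.length_map _).symm.trans hlen, hfold⟩

instance : Finite gens := by
  unfold gens
  infer_instance

theorem card_gens_le : Nat.card gens ≤ 4 := by
  classical
  have : gens = (({⇑aPerm, ⇑bPerm, ⇑aPerm⁻¹, ⇑bPerm⁻¹} : Finset _) : Set _) := by simp [gens]
  rw [Nat.card_coe_set_eq, this, Set.ncard_coe_finset]
  exact Finset.card_le_four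

def decode : DecoratedTree gens → List Bool → List Bool
  | .leaf w => (w.map Subtype.val).foldr (· ∘ ·) id
  | .node b l r => wreath b (decode l) (decode r)

noncomputable def cost (f : List Bool → List Bool) (S : BTree) : ℕ :=
  ((leavesOf S).length - 1) + (((leavesOf S).map fun v => len (sec f v)).sum)

theorem exists_cost_eq_nu (f : List Bool → List Bool) : ∃ S, cost f S = nu f :=
  (Nat.sInf_mem (⟨_, .leaf, rfl⟩ : {m | ∃ S, m = cost f S}.Nonempty)).imp fun _ h => h.symm

theorem length_leavesOf_pos (S : BTree) : 0 < (leavesOf S).length := by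
  induction S with
  | leaf => simp [leavesOf]
  | node l r ihl _ =>
    rw [leavesOf, List.length_append, List.length_map]
    omega

theorem cost_leaf (f : List Bool → List Bool) : cost f .leaf = len f := by
  simp only [cost, leavesOf, List.length_singleton, Nat.sub_self, List.map_singleton,
    List.sum_singleton, Nat.zero_add]
  rfl

theorem cost_node (f : List Bool → List Bool) (l r : BTree) :
    cost f (.node l r) = cost (sec f [false]) l + cost (sec f [true]) r + 1 := by
  have hl := length_leavesOf_pos l
  have hr := length_leavesOf_pos r
  simp only [cost, leavesOf, List.map_append, List.map_map, List.sum_append, List.length_append,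
    List.length_map, Function.comp_def, sec_sec, List.singleton_append]
  omega

theorem exists_decode_eq_of_mem_wordMaps {f : List Bool → List Bool} (hf : f ∈ wordMaps)
    (S : BTree) : ∃ t : DecoratedTree gens, decode t = f ∧ t.size = cost f S := by
  induction S generalizing f with
  | leaf =>
    obtain ⟨w, hlen, hw⟩ := exists_word_length_eq_len hf
    exact ⟨.leaf w, hw, by rw [cost_leaf, ← hlen]; rfl⟩
  | node l r ihl ihr =>
    obtain ⟨tl, hdl, hsl⟩ := ihl (sec_mem_wordMaps hf [false])
    obtain ⟨tr, hdr, hsr⟩ := ihr (sec_mem_wordMaps hf [true])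
    refine ⟨.node ((f [false]).headD false) tl tr, ?_, ?_⟩
    · rw [decode, hdl, hdr]
      exact (IsTreeAut.of_mem_wordMaps hf).eq_wreath.symm
    · rw [cost_node, ← hsl, ← hsr]
      rfl

/-- The number of elements `g` of `G = ⟨a, b⟩` with `ν(g) ≤ n` is at most `40^n`. -/
theorem nu_ball_card_le :
    ∀ n : ℕ,
      {g : Equiv.Perm (List Bool) |
        g ∈ Subgroup.closure ({aPerm, bPerm} : Set (Equiv.Perm (List Bool))) ∧
          nu ⇑g ≤ n}.Finite ∧
      Nat.card {g : Equiv.Perm (List Bool) //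
        g ∈ Subgroup.closure ({aPerm, bPerm} : Set (Equiv.Perm (List Bool))) ∧
          nu ⇑g ≤ n} ≤ 40 ^ n := by
  intro n
  have hdecode (g : {g : Equiv.Perm (List Bool) //
      g ∈ Subgroup.closure ({aPerm, bPerm} : Set (Equiv.Perm (List Bool))) ∧ nu ⇑g ≤ n}) :
      ∃ t : {t : DecoratedTree gens // t.size ≤ n}, decode t = ⇑g.1 := by
    obtain ⟨S, hS⟩ := exists_cost_eq_nu ⇑g.1
    obtain ⟨t, ht, hsize⟩ := exists_decode_eq_of_mem_wordMaps (coe_mem_wordMaps g.2.1) S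
    exact ⟨⟨t, hsize.trans_le (hS.trans_le g.2.2)⟩, ht⟩
  choose code hcode using hdecode
  have hinj : Function.Injective code := fun g₁ g₂ h =>
    Subtype.ext <| DFunLike.coe_injective <| by rw [← hcode g₁, ← hcode g₂, h]
  refine ⟨Set.finite_coe_iff.mp (Finite.of_injective code hinj), ?_⟩
  calc _ ≤ Nat.card {t : DecoratedTree gens // t.size ≤ n} :=
        Nat.card_le_card_of_injective code hinj
    _ ≤ (2 * Nat.card gens + 9) ^ n := DecoratedTree.card_size_le n
    _ ≤ 40 ^ n := Nat.pow_le_pow_left (by linarith [card_gens_le]) n
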